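/- If the length of a cube in the integer lattice is measured by its edge vectors, then the edge length is an integer: if three pairwise orthogonal vectors in ℤ³ all have the same length d > 0, then d is a (positive) integer. -/

import Mathlib

/-!
The matrix `M` with rows `a, b, c` satisfies `M * Mᵀ = d² • 1`, so `(det M)² = (d²)³`.
An integer whose cube is a perfect square is itself a perfect square, hence `d² = m²`
for some integer `m`, and `d = |m|`.
-/

def dot3 (a b : Fin 3 → ℤ) : ℤ := a 0 * b 0 + a 1 * b 1 + a 2 * b 2

open Matrix

theorem Matrix.det_sq_of_mul_transpose_eq_smul_one {n R : Type*} [Fintype n] [DecidableEq n]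
    [CommRing R] {M : Matrix n n R} {r : R} (h : M * Mᵀ = r • 1) :
    M.det ^ 2 = r ^ Fintype.card n := by
  simpa [sq] using congrArg det h

theorem Int.exists_sq_eq_of_pow_odd_eq_sq {N D : ℤ} {k : ℕ} (hN : N ≠ 0)
    (h : N ^ (2 * k + 1) = D ^ 2) : ∃ m : ℤ, m ^ 2 = N := by
  obtain ⟨m, rfl⟩ : N ^ k ∣ D := by
    rw [← Int.pow_dvd_pow_iff two_ne_zero, ← h, ← pow_mul, mul_comm]
    exact pow_dvd_pow N (Nat.le_succ _)
  exact ⟨m, mul_left_cancel₀ (pow_ne_zero (2 * k) hN) (by linear_combination -h)⟩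

theorem of_mul_transpose_eq_smul_one_of_dot3 {a b c : Fin 3 → ℤ} {N : ℤ}
    (hab : dot3 a b = 0) (hac : dot3 a c = 0) (hbc : dot3 b c = 0)
    (ha : dot3 a a = N) (hb : dot3 b b = N) (hc : dot3 c c = N) :
    of ![a, b, c] * (of ![a, b, c])ᵀ = N • 1 := by
  simp only [dot3] at *
  ext i j
  fin_cases i <;> fin_cases j <;> simp [mul_apply, Fin.sum_univ_three] <;> linarith

theorem edge_length_is_integer (a b c : Fin 3 → ℤ) (d : ℝ) (hd : 0 < d)
    (hab : dot3 a b = 0) (hac : dot3 a c = 0) (hbc : dot3 b c = 0)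
    (ha : (dot3 a a : ℝ) = d ^ 2) (hb : (dot3 b b : ℝ) = d ^ 2)
    (hc : (dot3 c c : ℝ) = d ^ 2) :
    ∃ n : ℕ, 0 < n ∧ (n : ℝ) = d := by
  have hba : dot3 b b = dot3 a a := by exact_mod_cast hb.trans ha.symm
  have hca : dot3 c c = dot3 a a := by exact_mod_cast hc.trans ha.symm
  have hN : dot3 a a ≠ 0 := by
    have : (dot3 a a : ℝ) ≠ 0 := by rw [ha]; positivity
    exact_mod_cast this
  have hdet := det_sq_of_mul_transpose_eq_smul_one
    (of_mul_transpose_eq_smul_one_of_dot3 hab hac hbc rfl hba hca)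
  obtain ⟨m, hm⟩ := Int.exists_sq_eq_of_pow_odd_eq_sq (k := 1) hN hdet.symm
  have hm_sq : (m.natAbs : ℝ) ^ 2 = d ^ 2 := by
    rw [← ha, ← hm, ← Int.natAbs_sq]
    norm_cast
  have hm_eq : (m.natAbs : ℝ) = d := (pow_left_inj₀ (by positivity) hd.le two_ne_zero).mp hm_sq
  exact ⟨m.natAbs, by exact_mod_cast hm_eq ▸ hd, hm_eq⟩
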